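/- The maximum of the orthogonality score over the unit sphere equals N₁N₂N₃·max(N₁N₂, N₂N₃, N₁N₃), and it is attained exactly at the vectors ±eᵢ for which the complementary product NⱼNₖ (with {i, j, k} = {1, 2, 3}) is maximal. -/

import Mathlib

/-!
The grid is the product `G = S₁ × S₂ × S₃` of the admissible coordinate sets, and `|Sᵢ| = Nᵢ`
because `0 < dᵢ < Lᵢ` keeps the two families `±dᵢ + 2qLᵢ` apart. Counting pairs `(s, p)` by `s`,
`J₃(u)` is the sum over `s ∈ G` of the sizes of the level sets of `⟨u, ·⟩` through `s`.
If `uᵢ ≠ 0`, a point of a level set is determined by its other coordinates, so the level set has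
at most `∏_{j ≠ i} Nⱼ` points, with equality throughout when `u = ±eᵢ`. If a second coordinate
`uⱼ` is nonzero, the `j`-th coordinate is also pinned on the level set through a maximiser of
`⟨u, ·⟩` on `G`, and that level set is strictly smaller because `Nⱼ ≥ 2`.
-/

open scoped RealInnerProductSpace

/-- The image-source grid `G`: points `(ε₁d₁ + 2q₁L₁, ε₂d₂ + 2q₂L₂, ε₃d₃ + 2q₃L₃)`
with `εᵢ ∈ {-1, 1}` and `qᵢ ∈ {0, …, Nᵢ/2 - 1}`. -/
noncomputable def grid3 (L d : Fin 3 → ℝ) (N : Fin 3 → ℕ) : Set (EuclideanSpace ℝ (Fin 3)) :=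
  {x | ∃ (ε : Fin 3 → ℝ) (q : Fin 3 → ℤ),
    (∀ i, ε i = 1 ∨ ε i = -1) ∧
    (∀ i, 0 ≤ q i ∧ q i < (N i / 2 : ℕ)) ∧
    (∀ i, x i = ε i * d i + 2 * (q i : ℝ) * L i)}

/-- The orthogonality score `J₃(u)`: the number of ordered pairs `(s, p) ∈ G × G`
with `⟨u, s - p⟩ = 0`. -/
noncomputable def J3 (L d : Fin 3 → ℝ) (N : Fin 3 → ℕ) (u : EuclideanSpace ℝ (Fin 3)) : ℕ :=
  {sp : EuclideanSpace ℝ (Fin 3) × EuclideanSpace ℝ (Fin 3) |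
    sp.1 ∈ grid3 L d N ∧ sp.2 ∈ grid3 L d N ∧ ⟪u, sp.1 - sp.2⟫ = 0}.ncard

open Finset Fintype

section OrthPairs

variable {ι : Type*} [Fintype ι] [DecidableEq ι] (S : ι → Finset ℝ) (u : ι → ℝ)

noncomputable def levelSet (c : ℝ) : Finset (ι → ℝ) := {p ∈ piFinset S | u ⬝ᵥ p = c}

noncomputable def orthPairCount : ℕ := #{sp ∈ piFinset S ×ˢ piFinset S | u ⬝ᵥ sp.1 = u ⬝ᵥ sp.2}

variable {S u}

lemma mem_levelSet {c : ℝ} {p : ι → ℝ} : p ∈ levelSet S u c ↔ p ∈ piFinset S ∧ u ⬝ᵥ p = c :=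
  mem_filter

lemma orthPairCount_eq_sum_card_levelSet :
    orthPairCount S u = ∑ s ∈ piFinset S, #(levelSet S u (u ⬝ᵥ s)) := by
  simp only [orthPairCount, levelSet, card_filter, sum_product, eq_comm]

lemma dotProduct_update (p : ι → ℝ) (j : ι) (x : ℝ) :
    u ⬝ᵥ Function.update p j x = u ⬝ᵥ p + u j * (x - p j) := by
  rw [Pi.update_eq_sub_add_single, dotProduct_add, dotProduct_sub, dotProduct_single,
    dotProduct_single]
  ring

lemma update_mem_piFinset {p : ι → ℝ} (hp : p ∈ piFinset S) {j : ι} {x : ℝ} (hx : x ∈ S j) :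
    Function.update p j x ∈ piFinset S := by
  rw [mem_piFinset] at hp ⊢
  intro l
  rcases eq_or_ne l j with rfl | hl
  · simpa
  · simpa [Function.update_of_ne hl] using hp l

lemma mem_piFinset_update_singleton {p : ι → ℝ} {i : ι} {x : ℝ} :
    p ∈ piFinset (Function.update S i {x}) ↔ p i = x ∧ ∀ j ≠ i, p j ∈ S j := by
  rw [mem_piFinset]
  constructor
  · intro hp
    exact ⟨by simpa using hp i, fun j hj ↦ by simpa [Function.update_of_ne hj] using hp j⟩
  · rintro ⟨hpi, hp⟩ j
    rcases eq_or_ne j i with rfl | hj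
    · simpa using hpi
    · simpa [Function.update_of_ne hj] using hp j hj

lemma card_piFinset_update_singleton (i : ι) (x : ℝ) :
    #(piFinset (Function.update S i {x})) = ∏ j ∈ univ.erase i, #(S j) := by
  rw [card_piFinset, ← mul_prod_erase _ _ (mem_univ i), Function.update_self, card_singleton,
    one_mul]
  exact prod_congr rfl fun j hj ↦ by rw [Function.update_of_ne (ne_of_mem_erase hj)]

/-- Since `u i ≠ 0`, a point of a level set of `u ⬝ᵥ ·` is determined by its other coordinates. -/
lemma card_levelSet_le {i : ι} (hi : u i ≠ 0) (c : ℝ) :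
    #(levelSet S u c) ≤ ∏ j ∈ univ.erase i, #(S j) := by
  have hmaps : Set.MapsTo (Function.update · i 0) (levelSet S u c : Set (ι → ℝ))
      (piFinset (Function.update S i {0}) : Set (ι → ℝ)) := by
    intro p hp
    rw [mem_coe, mem_levelSet, mem_piFinset] at hp
    rw [mem_coe, mem_piFinset_update_singleton]
    exact ⟨by simp, fun j hj ↦ by simpa [Function.update_of_ne hj] using hp.1 j⟩
  have hinj : Set.InjOn (Function.update · i 0) (levelSet S u c : Set (ι → ℝ)) := by
    intro p hp q hq hpq
    rw [mem_coe, mem_levelSet] at hp hq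
    have hcoord := congr_arg (u ⬝ᵥ ·) hpq
    simp only [dotProduct_update, hp.2, hq.2, add_right_inj, mul_eq_mul_left_iff, hi,
      or_false, zero_sub, neg_inj] at hcoord
    ext j
    rcases eq_or_ne j i with rfl | hj
    · exact hcoord
    · simpa [Function.update_of_ne hj] using congr_fun hpq j
  calc #(levelSet S u c) ≤ #(piFinset (Function.update S i {0})) :=
        card_le_card_of_injOn _ hmaps hinj
    _ = ∏ j ∈ univ.erase i, #(S j) := card_piFinset_update_singleton i 0

lemma levelSet_eq_of_apply_eq_zero {i : ι} (hi : u i ≠ 0) (hu : ∀ j ≠ i, u j = 0)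
    {s : ι → ℝ} (hs : s ∈ piFinset S) :
    levelSet S u (u ⬝ᵥ s) = piFinset (Function.update S i {s i}) := by
  have hu_single : u = Pi.single i (u i) := by
    ext j
    rcases eq_or_ne j i with rfl | hj
    · simp
    · simp [hj, hu j hj]
  ext p
  rw [mem_levelSet, hu_single, single_dotProduct, single_dotProduct, mul_right_inj' hi,
    mem_piFinset_update_singleton]
  constructor
  · rintro ⟨hp, hpi⟩
    exact ⟨hpi, fun j _ ↦ mem_piFinset.1 hp j⟩
  · rintro ⟨hpi, hp⟩
    refine ⟨mem_piFinset.2 fun j ↦ ?_, hpi⟩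
    rcases eq_or_ne j i with rfl | hj
    · exact hpi ▸ mem_piFinset.1 hs j
    · exact hp j hj

/-- Exchanging the `j`-th coordinates of `p` and `s` stays in the grid and cannot exceed the
maximum, which forces `u j * p j = u j * s j`. -/
lemma apply_eq_of_isMaxOn {s p : ι → ℝ} (hsS : s ∈ piFinset S)
    (hs : IsMaxOn (u ⬝ᵥ ·) (piFinset S : Set (ι → ℝ)) s) (hp : p ∈ levelSet S u (u ⬝ᵥ s))
    {j : ι} (hj : u j ≠ 0) : p j = s j := by
  rw [mem_levelSet] at hp
  have hle₁ : u ⬝ᵥ Function.update p j (s j) ≤ u ⬝ᵥ s :=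
    hs (update_mem_piFinset hp.1 (mem_piFinset.1 hsS j))
  have hle₂ : u ⬝ᵥ Function.update s j (p j) ≤ u ⬝ᵥ s :=
    hs (update_mem_piFinset hsS (mem_piFinset.1 hp.1 j))
  rw [dotProduct_update, hp.2] at hle₁
  rw [dotProduct_update] at hle₂
  have : u j * (s j - p j) = 0 := by linarith
  simpa [hj, sub_eq_zero, eq_comm] using this

lemma exists_card_levelSet_lt {i j : ι} (hij : i ≠ j) (hi : u i ≠ 0) (hj : u j ≠ 0)
    (hS : ∀ l, (S l).Nonempty) (hSj : 1 < #(S j)) :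
    ∃ s ∈ piFinset S, #(levelSet S u (u ⬝ᵥ s)) < ∏ l ∈ univ.erase i, #(S l) := by
  obtain ⟨s, hsS, hs⟩ := exists_max_image (piFinset S) (u ⬝ᵥ ·) (piFinset_nonempty.2 hS)
  refine ⟨s, hsS, ?_⟩
  have hsub : levelSet S u (u ⬝ᵥ s) ⊆ levelSet (Function.update S j {s j}) u (u ⬝ᵥ s) := by
    intro p hp
    rw [mem_levelSet, mem_piFinset_update_singleton]
    exact ⟨⟨apply_eq_of_isMaxOn hsS hs hp hj, fun l _ ↦ mem_piFinset.1 (mem_levelSet.1 hp).1 l⟩,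
      (mem_levelSet.1 hp).2⟩
  calc #(levelSet S u (u ⬝ᵥ s))
      ≤ ∏ l ∈ univ.erase i, #(Function.update S j {s j} l) :=
        (card_le_card hsub).trans (card_levelSet_le hi _)
    _ < ∏ l ∈ univ.erase i, #(S l) := by
        refine prod_lt_prod (fun l _ ↦ ?_) (fun l _ ↦ ?_)
          ⟨j, mem_erase.2 ⟨hij.symm, mem_univ j⟩, ?_⟩
        · rcases eq_or_ne l j with rfl | hl
          · simp
          · simpa [Function.update_of_ne hl] using (hS l).card_pos
        · rcases eq_or_ne l j with rfl | hl
          · simpa using (hS l).card_pos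
          · simp [Function.update_of_ne hl]
        · simpa using hSj

lemma orthPairCount_le {i : ι} (hi : u i ≠ 0) :
    orthPairCount S u ≤ (∏ l, #(S l)) * ∏ l ∈ univ.erase i, #(S l) := by
  rw [orthPairCount_eq_sum_card_levelSet, ← card_piFinset, ← smul_eq_mul]
  exact sum_le_card_nsmul _ _ _ fun s _ ↦ card_levelSet_le hi _

lemma orthPairCount_eq_of_apply_eq_zero {i : ι} (hi : u i ≠ 0) (hu : ∀ j ≠ i, u j = 0) :
    orthPairCount S u = (∏ l, #(S l)) * ∏ l ∈ univ.erase i, #(S l) := by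
  rw [orthPairCount_eq_sum_card_levelSet, ← card_piFinset, ← smul_eq_mul, ← sum_const]
  refine sum_congr rfl fun s hs ↦ ?_
  rw [levelSet_eq_of_apply_eq_zero hi hu hs, card_piFinset_update_singleton]

lemma orthPairCount_lt {i j : ι} (hij : i ≠ j) (hi : u i ≠ 0) (hj : u j ≠ 0)
    (hS : ∀ l, (S l).Nonempty) (hSj : 1 < #(S j)) :
    orthPairCount S u < (∏ l, #(S l)) * ∏ l ∈ univ.erase i, #(S l) := by
  rw [orthPairCount_eq_sum_card_levelSet, ← card_piFinset, ← smul_eq_mul, ← sum_const]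
  obtain ⟨s, hs, hlt⟩ := exists_card_levelSet_lt hij hi hj hS hSj
  exact sum_lt_sum (fun s _ ↦ card_levelSet_le hi _) ⟨s, hs, hlt⟩

lemma orthPairCount_eq_iff {i : ι} (hi : u i ≠ 0) (hS : ∀ l, 1 < #(S l)) :
    orthPairCount S u = (∏ l, #(S l)) * ∏ l ∈ univ.erase i, #(S l) ↔ ∀ j ≠ i, u j = 0 := by
  refine ⟨fun h ↦ ?_, orthPairCount_eq_of_apply_eq_zero hi⟩
  by_contra! ⟨j, hji, hj⟩
  exact (orthPairCount_lt hji.symm hi hj (fun l ↦ card_pos.1 (one_pos.trans (hS l))) (hS j)).ne h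

end OrthPairs

lemma EuclideanSpace.eq_single_or_eq_neg_single_of_norm_eq_one {ι : Type*} [Fintype ι]
    [DecidableEq ι] {u : EuclideanSpace ℝ ι} (hu : ‖u‖ = 1) {i : ι} (hi : ∀ j ≠ i, u j = 0) :
    u = EuclideanSpace.single i 1 ∨ u = -EuclideanSpace.single i 1 := by
  have hu_eq : u = EuclideanSpace.single i (u i) := by
    ext j
    rcases eq_or_ne j i with rfl | hj
    · simp
    · simp [hj, hi j hj]
  rw [hu_eq, PiLp.norm_single, Real.norm_eq_abs, abs_eq zero_le_one] at hu
  rcases hu with h | h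
  · exact .inl (by rw [hu_eq, h])
  · exact .inr (by rw [hu_eq, h]; exact PiLp.single_neg 2 i)

lemma prod_univ_erase_fin_three (N : Fin 3 → ℕ) :
    ∏ j ∈ univ.erase 0, N j = N 1 * N 2 ∧ ∏ j ∈ univ.erase 1, N j = N 0 * N 2 ∧
      ∏ j ∈ univ.erase 2, N j = N 0 * N 1 := by
  refine ⟨?_, ?_, ?_⟩
  · rw [show univ.erase (0 : Fin 3) = {1, 2} by decide, prod_pair (by decide)]
  · rw [show univ.erase (1 : Fin 3) = {0, 2} by decide, prod_pair (by decide)]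
  · rw [show univ.erase (2 : Fin 3) = {0, 1} by decide, prod_pair (by decide)]

lemma prod_univ_erase_le_max (N : Fin 3 → ℕ) (i : Fin 3) :
    ∏ j ∈ univ.erase i, N j ≤ max (N 0 * N 1) (max (N 1 * N 2) (N 0 * N 2)) := by
  obtain ⟨h0, h1, h2⟩ := prod_univ_erase_fin_three N
  fin_cases i <;> simp only [Fin.zero_eta, Fin.mk_one, Fin.reduceFinMk, h0, h1, h2] <;> omega

lemma exists_prod_univ_erase_eq_max (N : Fin 3 → ℕ) :
    ∃ i : Fin 3, ∏ j ∈ univ.erase i, N j = max (N 0 * N 1) (max (N 1 * N 2) (N 0 * N 2)) := by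
  obtain ⟨h0, h1, h2⟩ := prod_univ_erase_fin_three N
  rcases max_choice (N 1 * N 2) (N 0 * N 2) with h | h <;>
    rcases max_choice (N 0 * N 1) (max (N 1 * N 2) (N 0 * N 2)) with h' | h'
  · exact ⟨2, by rw [h2, h']⟩
  · exact ⟨0, by rw [h0, h', h]⟩
  · exact ⟨2, by rw [h2, h']⟩
  · exact ⟨1, by rw [h1, h', h]⟩

noncomputable def mirrorCoords (d L : ℝ) (n : ℕ) : Finset ℝ :=
  (({1, -1} : Finset ℝ) ×ˢ Ico (0 : ℤ) n).image fun εq ↦ εq.1 * d + 2 * εq.2 * L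

lemma mem_mirrorCoords {d L x : ℝ} {n : ℕ} :
    x ∈ mirrorCoords d L n ↔ ∃ (ε : ℝ) (q : ℤ), (ε = 1 ∨ ε = -1) ∧ (0 ≤ q ∧ q < n) ∧
      x = ε * d + 2 * q * L := by
  simp only [mirrorCoords, mem_image, mem_product, mem_insert, mem_singleton, mem_Ico,
    Prod.exists, and_assoc, eq_comm (a := x)]

lemma intCast_mul_ne {d L : ℝ} (hd : 0 < d) (hdL : d < L) (k : ℤ) : (k : ℝ) * L ≠ d := by
  rcases le_or_gt k 0 with hk | hk
  · have : (k : ℝ) ≤ 0 := by exact_mod_cast hk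
    nlinarith
  · have : (1 : ℝ) ≤ k := by exact_mod_cast hk
    nlinarith

lemma card_mirrorCoords {d L : ℝ} (hd : 0 < d) (hdL : d < L) (n : ℕ) :
    #(mirrorCoords d L n) = 2 * n := by
  have hL : L ≠ 0 := (hd.trans hdL).ne'
  rw [mirrorCoords, card_image_of_injOn, card_product, card_pair (by norm_num), Int.card_Ico,
    sub_zero, Int.toNat_natCast]
  rintro ⟨ε, q⟩ hεq ⟨ε', q'⟩ hεq' h
  simp only [coe_product, Set.mem_prod, mem_coe, mem_insert, mem_singleton] at hεq hεq' h
  rcases hεq.1 with rfl | rfl <;> rcases hεq'.1 with rfl | rfl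
  · simp_all
  · exact absurd (by push_cast; linarith) (intCast_mul_ne hd hdL (q' - q))
  · exact absurd (by push_cast; linarith) (intCast_mul_ne hd hdL (q - q'))
  · simp_all

section Grid

variable (L d : Fin 3 → ℝ) (N : Fin 3 → ℕ)

noncomputable def gridCoords (i : Fin 3) : Finset ℝ := mirrorCoords (d i) (L i) (N i / 2)

lemma card_gridCoords (hd : ∀ i, 0 < d i ∧ d i < L i) (hN : ∀ i, Even (N i)) (i : Fin 3) :
    #(gridCoords L d N i) = N i :=
  (card_mirrorCoords (hd i).1 (hd i).2 _).trans (Nat.two_mul_div_two_of_even (hN i))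

lemma grid3_eq_image :
    grid3 L d N = WithLp.toLp 2 '' ↑(piFinset (gridCoords L d N)) := by
  ext x
  simp only [grid3, Set.mem_ofPred_eq, Set.mem_image, mem_coe, mem_piFinset, gridCoords,
    mem_mirrorCoords]
  constructor
  · rintro ⟨ε, q, hε, hq, hx⟩
    exact ⟨x.ofLp, fun i ↦ ⟨ε i, q i, hε i, hq i, hx i⟩, rfl⟩
  · rintro ⟨x, hx, rfl⟩
    choose ε q hε hq hx using hx
    exact ⟨ε, q, hε, hq, hx⟩

lemma J3_eq_orthPairCount (u : EuclideanSpace ℝ (Fin 3)) :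
    J3 L d N u = orthPairCount (gridCoords L d N) u.ofLp := by
  have hinner : ∀ a b : Fin 3 → ℝ,
      ⟪u, WithLp.toLp 2 a - WithLp.toLp 2 b⟫ = 0 ↔ u.ofLp ⬝ᵥ a = u.ofLp ⬝ᵥ b := by
    intro a b
    rw [inner_sub_right, sub_eq_zero, EuclideanSpace.inner_eq_star_dotProduct,
      EuclideanSpace.inner_eq_star_dotProduct]
    simp [dotProduct_comm]
  rw [J3, orthPairCount, grid3_eq_image, ← Set.ncard_coe_finset, eq_comm,
    ← Set.ncard_image_of_injective _ ((WithLp.toLp_injective 2).prodMap (WithLp.toLp_injective 2))]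
  refine congrArg Set.ncard ?_
  ext ⟨s, p⟩
  simp only [Set.mem_ofPred_eq, Set.mem_image, coe_filter, mem_product, Prod.exists, Prod.map,
    Prod.mk.injEq]
  constructor
  · rintro ⟨a, b, ⟨⟨ha, hb⟩, h⟩, rfl, rfl⟩
    exact ⟨⟨a, ha, rfl⟩, ⟨b, hb, rfl⟩, (hinner a b).2 h⟩
  · rintro ⟨⟨a, ha, rfl⟩, ⟨b, hb, rfl⟩, h⟩
    exact ⟨a, b, ⟨⟨ha, hb⟩, (hinner a b).1 h⟩, rfl, rfl⟩

lemma J3_le_of_apply_ne_zero (hd : ∀ i, 0 < d i ∧ d i < L i) (hN : ∀ i, Even (N i))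
    {u : EuclideanSpace ℝ (Fin 3)} {i : Fin 3} (hi : u i ≠ 0) :
    J3 L d N u ≤ N 0 * N 1 * N 2 * ∏ j ∈ univ.erase i, N j := by
  simpa only [J3_eq_orthPairCount, card_gridCoords L d N hd hN, Fin.prod_univ_three] using
    orthPairCount_le (S := gridCoords L d N) hi

lemma J3_eq_iff_of_apply_ne_zero (hd : ∀ i, 0 < d i ∧ d i < L i)
    (hN : ∀ i, 0 < N i ∧ Even (N i)) {u : EuclideanSpace ℝ (Fin 3)} {i : Fin 3} (hi : u i ≠ 0) :
    J3 L d N u = N 0 * N 1 * N 2 * ∏ j ∈ univ.erase i, N j ↔ ∀ j ≠ i, u j = 0 := by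
  have hS := card_gridCoords L d N hd fun i ↦ (hN i).2
  have hS_gt : ∀ l, 1 < #(gridCoords L d N l) := fun l ↦ by
    rw [hS]; obtain ⟨hpos, m, hm⟩ := hN l; omega
  simpa only [J3_eq_orthPairCount, hS, Fin.prod_univ_three] using
    orthPairCount_eq_iff (S := gridCoords L d N) hi hS_gt

end Grid

theorem J3_max_on_sphere_general (L d : Fin 3 → ℝ) (N : Fin 3 → ℕ)
    (hd : ∀ i, 0 < d i ∧ d i < L i)
    (hN : ∀ i, 0 < N i ∧ Even (N i)) :
    (∀ v : EuclideanSpace ℝ (Fin 3), ‖v‖ = 1 →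
      J3 L d N v ≤ N 0 * N 1 * N 2 * max (N 0 * N 1) (max (N 1 * N 2) (N 0 * N 2))) ∧
    (∃ v : EuclideanSpace ℝ (Fin 3), ‖v‖ = 1 ∧
      J3 L d N v = N 0 * N 1 * N 2 * max (N 0 * N 1) (max (N 1 * N 2) (N 0 * N 2))) ∧
    (∀ u : EuclideanSpace ℝ (Fin 3), ‖u‖ = 1 →
      (J3 L d N u = N 0 * N 1 * N 2 * max (N 0 * N 1) (max (N 1 * N 2) (N 0 * N 2)) ↔
        ∃ i : Fin 3, (u = EuclideanSpace.single i 1 ∨ u = -EuclideanSpace.single i 1) ∧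
          ∏ j ∈ Finset.univ.erase i, N j =
            max (N 0 * N 1) (max (N 1 * N 2) (N 0 * N 2)))) := by
  have hle := @J3_le_of_apply_ne_zero L d N hd fun i ↦ (hN i).2
  have heq := @J3_eq_iff_of_apply_ne_zero L d N hd hN
  have exists_ne_zero : ∀ u : EuclideanSpace ℝ (Fin 3), ‖u‖ = 1 → ∃ i, u i ≠ 0 := fun u hu ↦ by
    by_contra! h
    exact one_ne_zero (hu ▸ norm_eq_zero.2 (by ext i; exact h i))
  refine ⟨fun v hv ↦ ?_, ?_, fun u hu ↦ ⟨fun hJ ↦ ?_, ?_⟩⟩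
  · obtain ⟨i, hi⟩ := exists_ne_zero v hv
    exact (hle hi).trans (Nat.mul_le_mul_left _ (prod_univ_erase_le_max N i))
  · obtain ⟨i, hi⟩ := exists_prod_univ_erase_eq_max N
    exact ⟨EuclideanSpace.single i 1, by simp,
      hi ▸ (heq (i := i) (by simp)).2 fun j hj ↦ by simp [hj]⟩
  · obtain ⟨i, hi⟩ := exists_ne_zero u hu
    have hPi := le_antisymm (prod_univ_erase_le_max N i)
      (Nat.le_of_mul_le_mul_left (hJ ▸ hle hi)
        (Nat.mul_pos (Nat.mul_pos (hN 0).1 (hN 1).1) (hN 2).1))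
    exact ⟨i, EuclideanSpace.eq_single_or_eq_neg_single_of_norm_eq_one hu
      ((heq hi).1 (by rw [hJ, hPi])), hPi⟩
  · rintro ⟨i, hu_eq, hPi⟩
    have hi : u i ≠ 0 := by rcases hu_eq with rfl | rfl <;> simp
    rw [← hPi, heq hi]
    intro j hj
    rcases hu_eq with rfl | rfl <;> simp [hj]

/-- The maximum of the orthogonality score over the unit sphere equals
`N₁N₂N₃ · max(N₁N₂, N₂N₃, N₁N₃)`, it is attained, and it is attained exactly at the
signed basis vectors `±eᵢ` whose complementary product `∏_{j ≠ i} Nⱼ` is maximal. -/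
theorem J3_max_on_sphere (L d : Fin 3 → ℝ) (N : Fin 3 → ℕ)
    (hL : ∀ i, 0 < L i) (hd : ∀ i, 0 < d i ∧ d i < L i)
    (hN : ∀ i, 0 < N i ∧ Even (N i)) :
    (∀ v : EuclideanSpace ℝ (Fin 3), ‖v‖ = 1 →
      J3 L d N v ≤ N 0 * N 1 * N 2 * max (N 0 * N 1) (max (N 1 * N 2) (N 0 * N 2))) ∧
    (∃ v : EuclideanSpace ℝ (Fin 3), ‖v‖ = 1 ∧
      J3 L d N v = N 0 * N 1 * N 2 * max (N 0 * N 1) (max (N 1 * N 2) (N 0 * N 2))) ∧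
    (∀ u : EuclideanSpace ℝ (Fin 3), ‖u‖ = 1 →
      (J3 L d N u = N 0 * N 1 * N 2 * max (N 0 * N 1) (max (N 1 * N 2) (N 0 * N 2)) ↔
        ∃ i : Fin 3, (u = EuclideanSpace.single i 1 ∨ u = -EuclideanSpace.single i 1) ∧
          ∏ j ∈ Finset.univ.erase i, N j =
            max (N 0 * N 1) (max (N 1 * N 2) (N 0 * N 2)))) :=
  J3_max_on_sphere_general L d N hd hN
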